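/- Let C ∈ ℝ^{n1×r×n3} and let S ∈ ℝ^{r×r×n3} be f-diagonal. Then the Frobenius norm of their t-product satisfies ‖C * S‖_F ≤ ‖C‖_{1,F} · ‖S‖_F. -/

import Mathlib

open scoped BigOperators Matrix Kronecker ComplexConjugate
open Complex

/-- A third-order tensor of size `n1 × n2 × n3` with entries in `R`. -/
abbrev T3 (n1 n2 n3 : ℕ) (R : Type*) : Type _ := Fin n1 → Fin n2 → Fin n3 → R

namespace T3

variable {n1 n2 n3 l : ℕ}

/-- The Frobenius inner product `⟨A,B⟩ = Σ_{i,j,k} A_{ijk} B_{ijk}`. -/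
def tInner (A B : T3 n1 n2 n3 ℝ) : ℝ := ∑ i, ∑ j, ∑ k, A i j k * B i j k

/-- The Frobenius norm `‖A‖_F = √⟨A,A⟩`. -/
noncomputable def tNorm (A : T3 n1 n2 n3 ℝ) : ℝ := Real.sqrt (tInner A A)

/-- The `n × n` DFT matrix, `(F_n)_{ab} = ω^{ab}` (0-based), `ω = exp(-2πi/n)`. -/
noncomputable def dftMatrix (n : ℕ) : Matrix (Fin n) (Fin n) ℂ :=
  fun a b => Complex.exp (-(2 * (Real.pi : ℂ) * Complex.I) / (n : ℂ)) ^ ((a : ℕ) * (b : ℕ))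

/-- The `k`-th frontal slice `Â^{(k)}` of the DFT of `A` along the third dimension:
`Â(i,j,:) = F_{n3} · A(i,j,:)`. -/
noncomputable def hatSlice (A : T3 n1 n2 n3 ℝ) (k : Fin n3) : Matrix (Fin n1) (Fin n2) ℂ :=
  fun i j => ∑ m : Fin n3, dftMatrix n3 k m * (A i j m : ℂ)

/-- The block circulant matrix of `A`: the `(p,q)` block (0-based) is the frontal
slice `A^{(p-q mod n3)}`. -/
def bcirc (A : T3 n1 n2 n3 ℝ) : Matrix (Fin n3 × Fin n1) (Fin n3 × Fin n2) ℝ :=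
  fun p q => A p.2 q.2 (p.1 - q.1)

/-- The block diagonal matrix with diagonal blocks `Â^{(1)}, …, Â^{(n3)}`. -/
noncomputable def bdiag (A : T3 n1 n2 n3 ℝ) : Matrix (Fin n3 × Fin n1) (Fin n3 × Fin n2) ℂ :=
  fun p q => if p.1 = q.1 then hatSlice A p.1 p.2 q.2 else 0

/-- t-product: `(A*B)^{(k)} = Σ_q A^{(k-q mod n3)} B^{(q)}` (circular convolution of slices). -/
def tprod (A : T3 n1 n2 n3 ℝ) (B : T3 n2 l n3 ℝ) : T3 n1 l n3 ℝ :=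
  fun i j k => ∑ q : Fin n3, ∑ p : Fin n2, A i p (k - q) * B p j q

/-- Tensor transpose: `(Aᵀ)^{(k)} = (A^{(-k mod n3)})ᵀ`. -/
def tT (A : T3 n1 n2 n3 ℝ) : T3 n2 n1 n3 ℝ := fun j i k => A i j (-k)

/-- The identity tensor: first frontal slice the identity matrix, other slices zero. -/
def tI (q m : ℕ) : T3 q q m ℝ := fun i j k => if i = j ∧ (k : ℕ) = 0 then 1 else 0

/-- An orthogonal tensor: `Qᵀ * Q = Q * Qᵀ = I`. -/
def TOrth {n m : ℕ} (Q : T3 n n m ℝ) : Prop :=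
  tprod (tT Q) Q = tI n m ∧ tprod Q (tT Q) = tI n m

/-- A partially orthogonal tensor: `Qᵀ * Q = I`. -/
def PartOrth {n q m : ℕ} (Q : T3 n q m ℝ) : Prop := tprod (tT Q) Q = tI q m

/-- f-diagonal tensor: every frontal slice is a diagonal matrix. -/
def FDiag (S : T3 n1 n2 n3 ℝ) : Prop :=
  ∀ (i : Fin n1) (j : Fin n2) (k : Fin n3), (i : ℕ) ≠ (j : ℕ) → S i j k = 0

/-- Every Fourier-domain frontal slice of `S` has real, nonnegative, nonincreasing
diagonal entries. -/
def OrderedDiag (S : T3 n1 n2 n3 ℝ) : Prop :=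
  ∀ k : Fin n3,
    (∀ (i : Fin n1) (j : Fin n2), (i : ℕ) = (j : ℕ) →
      (hatSlice S k i j).im = 0 ∧ 0 ≤ (hatSlice S k i j).re) ∧
    (∀ (i i' : Fin n1) (j j' : Fin n2), (i : ℕ) = (j : ℕ) → (i' : ℕ) = (j' : ℕ) →
      (i : ℕ) ≤ (i' : ℕ) → (hatSlice S k i' j').re ≤ (hatSlice S k i j).re)

/-- A t-SVD of `A`: `A = U * S * Vᵀ` with `U, V` orthogonal and `S` f-diagonal. -/
def IsTSVD (A : T3 n1 n2 n3 ℝ) (U : T3 n1 n1 n3 ℝ) (S : T3 n1 n2 n3 ℝ)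
    (V : T3 n2 n2 n3 ℝ) : Prop :=
  TOrth U ∧ TOrth V ∧ FDiag S ∧ A = tprod (tprod U S) (tT V)

/-- An ordered t-SVD. -/
def IsOrderedTSVD (A : T3 n1 n2 n3 ℝ) (U : T3 n1 n1 n3 ℝ) (S : T3 n1 n2 n3 ℝ)
    (V : T3 n2 n2 n3 ℝ) : Prop :=
  IsTSVD A U S V ∧ OrderedDiag S

/-- Lateral slice `U(:,i,:)` as an `n1 × 1 × n3` tensor. -/
def lat (U : T3 n1 n2 n3 ℝ) (i : Fin n2) : T3 n1 1 n3 ℝ := fun a _ k => U a i k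

/-- Tube `S(i,j,:)` as a `1 × 1 × n3` tensor. -/
def tube (S : T3 n1 n2 n3 ℝ) (i : Fin n1) (j : Fin n2) : T3 1 1 n3 ℝ := fun _ _ k => S i j k

/-- The rank-one term `U(:,i,:) * S(i,j,:) * V(:,j,:)ᵀ`. -/
def rankOne (U : T3 n1 n1 n3 ℝ) (S : T3 n1 n2 n3 ℝ) (V : T3 n2 n2 n3 ℝ)
    (i : Fin n1) (j : Fin n2) : T3 n1 n2 n3 ℝ :=
  tprod (tprod (lat U i) (tube S i j)) (tT (lat V j))

/-- The normalized leading rank-one tensor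
`M₁ = U(:,1,:) * (S(1,1,:)/‖S(1,1,:)‖_F) * V(:,1,:)ᵀ`. -/
noncomputable def leadM (hn1 : 0 < n1) (hn2 : 0 < n2) (U : T3 n1 n1 n3 ℝ)
    (S : T3 n1 n2 n3 ℝ) (V : T3 n2 n2 n3 ℝ) : T3 n1 n2 n3 ℝ :=
  tprod (tprod (lat U ⟨0, hn1⟩)
      (fun _ _ k => S ⟨0, hn1⟩ ⟨0, hn2⟩ k / tNorm (tube S ⟨0, hn1⟩ ⟨0, hn2⟩)))
    (tT (lat V ⟨0, hn2⟩))

/-- `‖Y‖_{1,F}`: the maximal Euclidean norm of a column fiber of a frontal slice of `Ŷ`. -/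
noncomputable def norm1F (Y : T3 n1 n2 n3 ℝ) : ℝ :=
  ⨆ p : Fin n2 × Fin n3, Real.sqrt (∑ i, ‖hatSlice Y p.2 i p.1‖ ^ 2)

/-- The tubal rank: the maximal rank of a frontal slice of the third-mode DFT. -/
noncomputable def tubalRank (X : T3 n1 n2 n3 ℝ) : ℕ :=
  Finset.univ.sup fun k : Fin n3 => (hatSlice X k).rank

end T3

open T3

/-!
Taking the DFT along the third mode turns the t-product into the slice-wise matrix products
`Ĉ⁽ᵏ⁾ Ŝ⁽ᵏ⁾`, and since `F_{n3}ᴴ F_{n3} = n3 • 1` it multiplies the squared Frobenius norm by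
`n3` (Parseval). When `S` is f-diagonal every `Ŝ⁽ᵏ⁾` is diagonal, so the `j`-th column of
`Ĉ⁽ᵏ⁾ Ŝ⁽ᵏ⁾` is the fiber `Ĉ(:,j,k)`, of norm at most `‖C‖_{1,F}`, scaled by `Ŝ⁽ᵏ⁾_{jj}`.
Summing the squares over all columns and slices gives `n3 ‖C * S‖_F² ≤ n3 ‖C‖_{1,F}² ‖S‖_F²`.
-/

noncomputable def dftRoot (n : ℕ) : ℂ := Complex.exp (-(2 * (Real.pi : ℂ) * Complex.I) / (n : ℂ))

lemma dftMatrix_apply (n : ℕ) (a b : Fin n) :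
    dftMatrix n a b = dftRoot n ^ ((a : ℕ) * (b : ℕ)) :=
  rfl

lemma isPrimitiveRoot_dftRoot {n : ℕ} (hn : n ≠ 0) : IsPrimitiveRoot (dftRoot n) n := by
  have h : dftRoot n = (Complex.exp (2 * Real.pi * Complex.I / n))⁻¹ := by
    rw [dftRoot, ← Complex.exp_neg, neg_div]
  exact h ▸ (Complex.isPrimitiveRoot_exp n hn).inv

lemma dftMatrix_apply_add {n : ℕ} (k t q : Fin n) :
    dftMatrix n k (t + q) = dftMatrix n k t * dftMatrix n k q := by
  have hω := isPrimitiveRoot_dftRoot k.pos.ne'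
  rw [dftMatrix_apply, dftMatrix_apply, dftMatrix_apply, ← pow_add, ← mul_add, Fin.val_add]
  exact pow_eq_pow_of_modEq ((Nat.mod_modEq _ _).mul_left _) hω.pow_eq_one

lemma sum_pow_eq_zero_of_pow_eq_one {K : Type*} [Field K] {z : K} {n : ℕ} (hz : z ^ n = 1)
    (h1 : z ≠ 1) : ∑ k : Fin n, z ^ (k : ℕ) = 0 := by
  rw [Fin.sum_univ_eq_sum_range (z ^ ·), geom_sum_eq h1, hz, sub_self, zero_div]

lemma conjTranspose_dftMatrix_mul_self (n : ℕ) :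
    (dftMatrix n)ᴴ * dftMatrix n = (n : ℂ) • (1 : Matrix (Fin n) (Fin n) ℂ) := by
  ext a b
  have hω := isPrimitiveRoot_dftRoot a.pos.ne'
  have hω0 : dftRoot n ≠ 0 := hω.ne_zero a.pos.ne'
  set z := (dftRoot n ^ (a : ℕ))⁻¹ * dftRoot n ^ (b : ℕ)
  have hconj : starRingEnd ℂ (dftRoot n) = (dftRoot n)⁻¹ := by
    rw [Complex.inv_def, ← Complex.sq_norm, hω.norm'_eq_one a.pos.ne']
    simp
  have hterm : ∀ k : Fin n, star (dftMatrix n k a) * dftMatrix n k b = z ^ (k : ℕ) := by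
    intro k
    simp only [dftMatrix_apply, Complex.star_def, map_pow, hconj, z, mul_pow, inv_pow, ← pow_mul]
    ring
  simp only [Matrix.mul_apply, Matrix.conjTranspose_apply, hterm, Matrix.smul_apply,
    Matrix.one_apply, smul_eq_mul, mul_ite, mul_one, mul_zero]
  split_ifs with hab
  · simp [z, hab, hω0]
  · refine sum_pow_eq_zero_of_pow_eq_one ?_ ?_
    · rw [mul_pow, inv_pow, ← pow_mul, ← pow_mul, mul_comm _ n, mul_comm _ n, pow_mul, pow_mul,
        hω.pow_eq_one, one_pow, one_pow, inv_one, one_mul]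
    · simp only [z, ne_eq, inv_mul_eq_one₀ (pow_ne_zero _ hω0)]
      exact fun h => hab (Fin.ext (hω.pow_inj a.isLt b.isLt h))

lemma sum_normSq_dftMatrix_mulVec (n : ℕ) (x : Fin n → ℂ) :
    ∑ k, Complex.normSq ((dftMatrix n *ᵥ x) k) = n * ∑ m, Complex.normSq (x m) := by
  have hdot : ∀ y : Fin n → ℂ, ((∑ k, Complex.normSq (y k) : ℝ) : ℂ) = star y ⬝ᵥ y := by
    intro y
    simp [dotProduct, Complex.normSq_eq_conj_mul_self]
  apply Complex.ofReal_injective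
  rw [hdot, Complex.ofReal_mul, hdot, Matrix.star_mulVec, ← Matrix.dotProduct_mulVec,
    Matrix.mulVec_mulVec, conjTranspose_dftMatrix_mul_self, Matrix.smul_mulVec,
    Matrix.one_mulVec, dotProduct_smul, smul_eq_mul, Complex.ofReal_natCast]

namespace T3

variable {n1 n2 n3 l : ℕ}

lemma hatSlice_apply (A : T3 n1 n2 n3 ℝ) (k : Fin n3) (i : Fin n1) (j : Fin n2) :
    hatSlice A k i j = (dftMatrix n3 *ᵥ fun m => (A i j m : ℂ)) k :=
  rfl

lemma sum_normSq_hatSlice (A : T3 n1 n2 n3 ℝ) :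
    ∑ j, ∑ k, ∑ i, Complex.normSq (hatSlice A k i j) = n3 * tInner A A := by
  have fiber : ∀ (i : Fin n1) (j : Fin n2),
      ∑ k, Complex.normSq (hatSlice A k i j) = n3 * ∑ m, A i j m * A i j m := by
    intro i j
    simpa only [hatSlice_apply, Complex.normSq_ofReal] using
      sum_normSq_dftMatrix_mulVec n3 fun m => (A i j m : ℂ)
  calc ∑ j, ∑ k, ∑ i, Complex.normSq (hatSlice A k i j)
      = ∑ i, ∑ j, ∑ k, Complex.normSq (hatSlice A k i j) :=
        (Finset.sum_congr rfl fun j _ => Finset.sum_comm).trans Finset.sum_comm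
    _ = n3 * tInner A A := by simp_rw [fiber, tInner, Finset.mul_sum]

lemma hatSlice_tprod (A : T3 n1 n2 n3 ℝ) (B : T3 n2 l n3 ℝ) (k : Fin n3) :
    hatSlice (tprod A B) k = hatSlice A k * hatSlice B k := by
  have : NeZero n3 := ⟨k.pos.ne'⟩
  ext i j
  have shift : ∀ (p : Fin n2) (q : Fin n3),
      ∑ m, dftMatrix n3 k m * ((A i p (m - q) : ℂ) * B p j q)
        = hatSlice A k i p * (dftMatrix n3 k q * B p j q) := by
    intro p q
    rw [← Equiv.sum_comp (Equiv.addRight q), hatSlice, Finset.sum_mul]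
    refine Finset.sum_congr rfl fun t _ => ?_
    rw [Equiv.coe_addRight, add_sub_cancel_right, dftMatrix_apply_add]
    ring
  calc hatSlice (tprod A B) k i j
      = ∑ m, ∑ q, ∑ p, dftMatrix n3 k m * ((A i p (m - q) : ℂ) * B p j q) := by
        simp only [hatSlice, tprod, Complex.ofReal_sum, Complex.ofReal_mul, Finset.mul_sum]
    _ = ∑ p, ∑ q, hatSlice A k i p * (dftMatrix n3 k q * B p j q) := by
        rw [Finset.sum_comm]
        simp_rw [Finset.sum_comm (γ := Fin n3) (α := Fin n2), shift]
    _ = (hatSlice A k * hatSlice B k) i j := by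
        simp only [Matrix.mul_apply, hatSlice, Finset.mul_sum]

lemma hatSlice_eq_diagonal {r : ℕ} {S : T3 r r n3 ℝ} (hS : FDiag S) (k : Fin n3) :
    hatSlice S k = Matrix.diagonal fun j => hatSlice S k j j := by
  ext i j
  by_cases hij : i = j
  · rw [hij, Matrix.diagonal_apply_eq]
  · rw [Matrix.diagonal_apply_ne _ hij, hatSlice]
    refine Finset.sum_eq_zero fun m _ => ?_
    rw [hS i j m (Fin.val_ne_of_ne hij), Complex.ofReal_zero, mul_zero]

lemma sum_normSq_hatSlice_le_norm1F_sq (C : T3 n1 n2 n3 ℝ) (j : Fin n2) (k : Fin n3) :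
    ∑ i, Complex.normSq (hatSlice C k i j) ≤ norm1F C ^ 2 := by
  have hle : Real.sqrt (∑ i, ‖hatSlice C k i j‖ ^ 2) ≤ norm1F C :=
    le_ciSup (f := fun p : Fin n2 × Fin n3 => Real.sqrt (∑ i, ‖hatSlice C p.2 i p.1‖ ^ 2))
      (Set.finite_range _).bddAbove (j, k)
  simpa only [Complex.sq_norm] using (Real.sqrt_le_iff.mp hle).2

lemma norm1F_nonneg (C : T3 n1 n2 n3 ℝ) : 0 ≤ norm1F C :=
  Real.iSup_nonneg fun _ => Real.sqrt_nonneg _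

lemma tInner_tprod_le_of_fDiag {r : ℕ} (C : T3 n1 r n3 ℝ) {S : T3 r r n3 ℝ} (hS : FDiag S) :
    tInner (tprod C S) (tprod C S) ≤ norm1F C ^ 2 * tInner S S := by
  have column : ∀ j k, ∑ i, Complex.normSq (hatSlice (tprod C S) k i j)
      ≤ norm1F C ^ 2 * ∑ i, Complex.normSq (hatSlice S k i j) := by
    intro j k
    calc ∑ i, Complex.normSq (hatSlice (tprod C S) k i j)
        = (∑ i, Complex.normSq (hatSlice C k i j)) * Complex.normSq (hatSlice S k j j) := by
          rw [hatSlice_tprod, hatSlice_eq_diagonal hS, Finset.sum_mul]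
          simp only [Matrix.mul_diagonal, Matrix.diagonal_apply_eq, Complex.normSq_mul]
      _ ≤ norm1F C ^ 2 * Complex.normSq (hatSlice S k j j) :=
          mul_le_mul_of_nonneg_right (sum_normSq_hatSlice_le_norm1F_sq C j k)
            (Complex.normSq_nonneg _)
      _ ≤ norm1F C ^ 2 * ∑ i, Complex.normSq (hatSlice S k i j) :=
          mul_le_mul_of_nonneg_left
            (Finset.single_le_sum (f := fun i => Complex.normSq (hatSlice S k i j))
              (fun i _ => Complex.normSq_nonneg _) (Finset.mem_univ j))
            (sq_nonneg _)
  have scaled :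
      (n3 : ℝ) * tInner (tprod C S) (tprod C S) ≤ n3 * (norm1F C ^ 2 * tInner S S) := by
    rw [mul_left_comm, ← sum_normSq_hatSlice, ← sum_normSq_hatSlice]
    simp only [Finset.mul_sum]
    exact Finset.sum_le_sum fun j _ => Finset.sum_le_sum fun k _ => (column j k).trans_eq
      (Finset.mul_sum _ _ _)
  rcases Nat.eq_zero_or_pos n3 with rfl | hn
  · simp [tInner]
  · exact le_of_mul_le_mul_left scaled (Nat.cast_pos.mpr hn)

end T3

/-- for `C ∈ ℝ^{n1×r×n3}` and f-diagonal `S ∈ ℝ^{r×r×n3}`,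
`‖C * S‖_F ≤ ‖C‖_{1,F} · ‖S‖_F`. -/
theorem stmt_11 (n1 r n3 : ℕ) (C : T3 n1 r n3 ℝ) (S : T3 r r n3 ℝ) (hS : FDiag S) :
    tNorm (tprod C S) ≤ norm1F C * tNorm S :=
  calc tNorm (tprod C S) ≤ Real.sqrt (norm1F C ^ 2 * tInner S S) :=
        Real.sqrt_le_sqrt (tInner_tprod_le_of_fDiag C hS)
    _ = norm1F C * tNorm S := by
        rw [Real.sqrt_mul (sq_nonneg _), Real.sqrt_sq (norm1F_nonneg C), tNorm]
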